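/- arXiv:2303.10004 — 3 statements merged into one kernel-verified Lean document; each statement's English description precedes it below -/
import Mathlib

section
/- Let Q = {q_1 < ... < q_k} and W = {w_1 < ... < w_k} be disjoint finite subsets of the integers ≥ 2. There exist n > max Q and a circular n-permutation σ with pinnacle set P(σ) = Q ∪ {n} and vale set V(σ) = W ∪ {1} if and only if q_j > w_j for every j in {1,...,k}. -/
/-
On a circle, the positions whose value is at most `x` (for `1 ≤ x < n`) split into arcs, and
along each arc the vales outnumber the pinnacles by one. So there are strictly more vales than
pinnacles of value `≤ x`. At `x = q_j` there are at least `j` pinnacles `q_1, …, q_j`, hence at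
least `j` elements of `W` that are `≤ q_j`, i.e. `w_j ≤ q_j`, and `w_j ≠ q_j` as `Q` and `W` are
disjoint. Conversely, if `w_j < q_j`
for all `j`, the circular word listing `n`, then the values outside `Q ∪ W` in decreasing order
down to `1`, then `q_1, w_1, …, q_k, w_k`, has pinnacle set `Q ∪ {n}` and vale set `W ∪ {1}`.
-/

set_option autoImplicit false

/-- The set of pinnacle values of the circular `n`-permutation `σ`,
as a subset of `{1, …, n}` (the value at position `i` is `σ i + 1`). -/
def pinnacleSet (n : ℕ) (σ : Equiv.Perm (Fin n)) : Finset ℕ :=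
  (Finset.univ.filter fun i : Fin n =>
      σ ((finRotate n).symm i) < σ i ∧ σ (finRotate n i) < σ i).image
    fun i => (σ i : ℕ) + 1

/-- The set of vale values of the circular `n`-permutation `σ`, as a subset of `{1, …, n}`. -/
def valeSet (n : ℕ) (σ : Equiv.Perm (Fin n)) : Finset ℕ :=
  (Finset.univ.filter fun i : Fin n =>
      σ i < σ ((finRotate n).symm i) ∧ σ i < σ (finRotate n i)).image
    fun i => (σ i : ℕ) + 1

open Finset Function

section Cyclic

variable {α β : Type*}

theorem apply_symm_ne {s : Equiv.Perm α} {f : α → β} (hf : Injective f) (hs : ∀ i, s i ≠ i)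
    (i : α) : f (s.symm i) ≠ f i :=
  hf.ne fun h => hs (s.symm i) (by rw [Equiv.apply_symm_apply, h])

variable [Fintype α] [LinearOrder β] (s : Equiv.Perm α) (f : α → β)

-- Positions in `α` are read cyclically along the successor map `s`; `f` assigns the values.
def cyclicPinnacles : Finset α := {i | f (s.symm i) < f i ∧ f (s i) < f i}

def cyclicVales : Finset α := {i | f i < f (s.symm i) ∧ f i < f (s i)}

def cyclicDescents : Finset α := {i | f (s i) < f i}

variable {s f}

theorem mem_cyclicPinnacles_iff (hf : Injective f) (hs : ∀ i, s i ≠ i) {i : α} :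
    i ∈ cyclicPinnacles s f ↔ i ∈ cyclicDescents s f ∧ s.symm i ∉ cyclicDescents s f := by
  simp only [cyclicPinnacles, cyclicDescents, mem_filter, mem_univ, true_and,
    Equiv.apply_symm_apply, not_lt]
  exact ⟨fun h => ⟨h.2, h.1.le⟩, fun h => ⟨h.2.lt_of_ne (apply_symm_ne hf hs i), h.1⟩⟩

theorem mem_cyclicVales_iff (hf : Injective f) (hs : ∀ i, s i ≠ i) {i : α} :
    i ∈ cyclicVales s f ↔ i ∉ cyclicDescents s f ∧ s.symm i ∈ cyclicDescents s f := by
  simp only [cyclicVales, cyclicDescents, mem_filter, mem_univ, true_and,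
    Equiv.apply_symm_apply, not_lt]
  exact ⟨fun h => ⟨h.2.le, h.1⟩, fun h => ⟨h.2, h.1.lt_of_ne (hf.ne (hs i).symm)⟩⟩

/-- On each maximal arc of positions with value `< t`, vales outnumber pinnacles by exactly one;
the last summand counts these arcs by their first position. -/
theorem card_filter_cyclicVales (hf : Injective f) (hs : ∀ i, s i ≠ i) (t : β) :
    #{i ∈ cyclicVales s f | f i < t} =
      #{i ∈ cyclicPinnacles s f | f i < t} + #{i | f i < t ∧ t ≤ f (s.symm i)} := by
  have local_count (i : α) :
      (if (f i < f (s.symm i) ∧ f i < f (s i)) ∧ f i < t then 1 else 0) +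
        (if f (s i) < f i ∧ f i < t then 1 else 0) =
      (if (f (s.symm i) < f i ∧ f (s i) < f i) ∧ f i < t then 1 else 0) +
        (if f i < f (s.symm i) ∧ f (s.symm i) < t then 1 else 0) +
        (if f i < t ∧ t ≤ f (s.symm i) then 1 else 0) := by
    have h₁ := apply_symm_ne hf hs i
    have h₂ : f i ≠ f (s i) := hf.ne (hs i).symm
    split_ifs <;> grind
  have shift : ∑ i, (if f (s i) < f i ∧ f i < t then 1 else 0) =
      ∑ i, (if f i < f (s.symm i) ∧ f (s.symm i) < t then 1 else 0) := by
    rw [← Equiv.sum_comp s.symm]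
    simp
  have total := sum_congr rfl fun i (_ : i ∈ univ) => local_count i
  simp only [sum_add_distrib, shift] at total
  simp only [card_filter, cyclicVales, cyclicPinnacles, filter_filter]
  omega

theorem exists_lt_le_apply_symm (hs : s.IsCycle) (hfix : ∀ i, s i ≠ i) {t : β} {x y : α}
    (hx : f x < t) (hy : t ≤ f y) : ∃ i, f i < t ∧ t ≤ f (s.symm i) := by
  obtain ⟨m, hm⟩ := hs.exists_pow_eq (hfix y) (hfix x)
  induction m generalizing y with
  | zero => exact absurd hy (by simpa [← hm] using hx)
  | succ m ih =>
    rw [pow_succ, Equiv.Perm.mul_apply] at hm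
    by_cases hsy : f (s y) < t
    · exact ⟨s y, hsy, by simpa using hy⟩
    · exact ih (not_lt.mp hsy) hm

theorem card_filter_cyclicPinnacles_lt (hf : Injective f) (hs : s.IsCycle) (hfix : ∀ i, s i ≠ i)
    {t : β} {x y : α} (hx : f x < t) (hy : t ≤ f y) :
    #{i ∈ cyclicPinnacles s f | f i < t} < #{i ∈ cyclicVales s f | f i < t} := by
  obtain ⟨i, hi⟩ := exists_lt_le_apply_symm hs hfix hx hy
  rw [card_filter_cyclicVales hf hfix]
  have : 0 < #{i | f i < t ∧ t ≤ f (s.symm i)} := card_pos.mpr ⟨i, by simpa using hi⟩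
  omega

end Cyclic

namespace Finset

theorem lt_card_filter_le_iff_orderEmbOfFin_le {α : Type*} [LinearOrder α] {s : Finset α}
    {k : ℕ} (h : #s = k) (j : Fin k) (x : α) :
    j < #{y ∈ s | y ≤ x} ↔ s.orderEmbOfFin h j ≤ x := by
  set e := s.orderEmbOfFin h
  constructor
  · intro hj
    by_contra! hlt
    have hsub : {y ∈ s | y ≤ x} ⊆ (Iio j).map e.toEmbedding := by
      intro y hy
      rw [mem_filter] at hy
      obtain ⟨i, rfl⟩ : y ∈ Set.range e := by rw [range_orderEmbOfFin]; exact hy.1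
      simpa using e.lt_iff_lt.mp (hy.2.trans_lt hlt)
    have := card_le_card hsub
    simp only [card_map, Fin.card_Iio] at this
    omega
  · intro hj
    have hsub : (Iic j).map e.toEmbedding ⊆ {y ∈ s | y ≤ x} := by
      intro y hy
      simp only [mem_map, mem_Iic] at hy
      obtain ⟨i, hi, rfl⟩ := hy
      exact mem_filter.mpr ⟨orderEmbOfFin_mem s h i, (e.le_iff_le.mpr hi).trans hj⟩
    have := card_le_card hsub
    simp only [card_map, Fin.card_Iic] at this
    omega

variable (s : Finset ℕ)

theorem nth_mem_of_lt_card {j : ℕ} (hj : j < #s) : Nat.nth (· ∈ s) j ∈ s :=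
  Nat.nth_mem_of_lt_card s.finite_toSet (by simpa using hj)

theorem nth_strictMonoOn : StrictMonoOn (Nat.nth (· ∈ s)) (Set.Iio #s) := by
  simpa using Nat.nth_strictMonoOn s.finite_toSet

theorem exists_lt_card_nth_eq {x : ℕ} (hx : x ∈ s) : ∃ j < #s, Nat.nth (· ∈ s) j = x := by
  simpa using Nat.exists_lt_card_finite_nth_eq s.finite_toSet hx

theorem nth_zero_eq {x : ℕ} (hx : x ∈ s) (hmin : ∀ y ∈ s, x ≤ y) : Nat.nth (· ∈ s) 0 = x := by
  obtain ⟨j, hj, rfl⟩ := s.exists_lt_card_nth_eq hx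
  rcases Nat.eq_zero_or_pos j with rfl | hj0
  · rfl
  · exact absurd (s.nth_strictMonoOn (Set.mem_Iio.mpr (by omega)) hj hj0)
      (not_lt.mpr (hmin _ (s.nth_mem_of_lt_card (by omega))))

theorem nth_card_sub_one_eq {x : ℕ} (hx : x ∈ s) (hmax : ∀ y ∈ s, y ≤ x) :
    Nat.nth (· ∈ s) (#s - 1) = x := by
  obtain ⟨j, hj, rfl⟩ := s.exists_lt_card_nth_eq hx
  rcases (Nat.le_sub_one_of_lt hj).lt_or_eq with hjs | hjs
  · exact absurd (s.nth_strictMonoOn hj (Set.mem_Iio.mpr (by omega)) hjs)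
      (not_lt.mpr (hmax _ (s.nth_mem_of_lt_card (by omega))))
  · rw [hjs]

theorem orderEmbOfFin_apply_eq_nth {k : ℕ} (h : #s = k) (j : Fin k) :
    s.orderEmbOfFin h j = Nat.nth (· ∈ s) j := by
  subst h
  refine (congrFun (orderEmbOfFin_unique rfl (f := fun j : Fin #s => Nat.nth (· ∈ s) j)
    (fun j => s.nth_mem_of_lt_card j.2) fun a b hab => s.nth_strictMonoOn a.2 b.2 hab) j).symm

end Finset

section CircularPermutation

variable {n : ℕ}

theorem finRotate_apply_ne (hn : 2 ≤ n) (i : Fin n) : finRotate n i ≠ i :=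
  Equiv.Perm.mem_support.mp (by simp [support_finRotate_of_le hn])

theorem val_finRotate (i : Fin n) :
    (finRotate n i : ℕ) = if (i : ℕ) + 1 = n then 0 else (i : ℕ) + 1 := by
  obtain ⟨m, rfl⟩ : ∃ m, n = m + 1 := ⟨n - 1, by have := i.pos; omega⟩
  rw [coe_finRotate]
  simp [Fin.ext_iff]

theorem val_finRotate_symm (i : Fin n) :
    ((finRotate n).symm i : ℕ) = if (i : ℕ) = 0 then n - 1 else (i : ℕ) - 1 := by
  obtain ⟨m, rfl⟩ : ∃ m, n = m + 1 := ⟨n - 1, by have := i.pos; omega⟩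
  rw [finRotate_symm_apply, Fin.coe_sub_one]
  simp only [Fin.ext_iff, Fin.val_zero]
  split_ifs <;> omega

theorem pinnacleSet_eq_image (σ : Equiv.Perm (Fin n)) :
    pinnacleSet n σ = (cyclicPinnacles (finRotate n) σ).image fun i => (σ i : ℕ) + 1 := rfl

theorem valeSet_eq_image (σ : Equiv.Perm (Fin n)) :
    valeSet n σ = (cyclicVales (finRotate n) σ).image fun i => (σ i : ℕ) + 1 := rfl

theorem card_filter_image_le (σ : Equiv.Perm (Fin n)) (S : Finset (Fin n)) {x : ℕ} (hx : x < n) :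
    #{v ∈ S.image (fun i => (σ i : ℕ) + 1) | v ≤ x} = #{i ∈ S | σ i < ⟨x, hx⟩} := by
  rw [filter_image, card_image_of_injective _ fun a b h => σ.injective (Fin.ext (by simpa using h))]
  congr 1

theorem card_filter_pinnacleSet_le_lt (σ : Equiv.Perm (Fin n)) {x : ℕ} (hx : 0 < x) (hxn : x < n) :
    #{v ∈ pinnacleSet n σ | v ≤ x} < #{v ∈ valeSet n σ | v ≤ x} := by
  have hn : 2 ≤ n := by omega
  rw [pinnacleSet_eq_image, valeSet_eq_image, card_filter_image_le σ _ hxn,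
    card_filter_image_le σ _ hxn]
  refine card_filter_cyclicPinnacles_lt σ.injective (isCycle_finRotate_of_le hn)
    (finRotate_apply_ne hn)
    (x := σ.symm ⟨0, by omega⟩) (y := σ.symm ⟨x, hxn⟩) ?_ ?_
  · simpa [Fin.lt_def] using hx
  · simp

theorem exists_perm_val_add_one_eq (g : ℕ → ℕ) (hg : ∀ p < n, g p ∈ Icc 1 n)
    (hsurj : ∀ v ∈ Icc 1 n, ∃ p < n, g p = v) :
    ∃ σ : Equiv.Perm (Fin n), ∀ i, (σ i : ℕ) + 1 = g i := by
  let F : Fin n → Fin n := fun i => ⟨g i - 1, by have := mem_Icc.1 (hg i i.2); omega⟩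
  have hF : Surjective F := fun v => by
    obtain ⟨p, hp, hpv⟩ := hsurj (v + 1) (by simp)
    exact ⟨⟨p, hp⟩, Fin.ext (by simp [F, hpv])⟩
  refine ⟨Equiv.ofBijective F hF.bijective_of_finite, fun i => ?_⟩
  have := mem_Icc.1 (hg i i.2)
  simp [F]
  omega

theorem mem_cyclicDescents_finRotate_iff (σ : Equiv.Perm (Fin n)) (g : ℕ → ℕ)
    (hσ : ∀ i, (σ i : ℕ) + 1 = g i) (i : Fin n) :
    i ∈ cyclicDescents (finRotate n) σ ↔ g (if (i : ℕ) + 1 = n then 0 else (i : ℕ) + 1) < g i := by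
  rw [← val_finRotate, ← hσ, ← hσ]
  simp only [cyclicDescents, mem_filter, mem_univ, true_and, Fin.lt_def, Nat.add_lt_add_iff_right]

end CircularPermutation

theorem orderEmbOfFin_lt_of_pinnacleSet_eq {n k : ℕ} {Q W : Finset ℕ} (hQW : Disjoint Q W)
    (hQ : ∀ q ∈ Q, 0 < q) (hQn : ∀ q ∈ Q, q < n) (hQk : #Q = k) (hWk : #W = k)
    (σ : Equiv.Perm (Fin n)) (hP : pinnacleSet n σ = Q ∪ {n}) (hV : valeSet n σ = W ∪ {1})
    (j : Fin k) : W.orderEmbOfFin hWk j < Q.orderEmbOfFin hQk j := by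
  set q := Q.orderEmbOfFin hQk j
  have hqQ : q ∈ Q := orderEmbOfFin_mem Q hQk j
  have hPq : j < #{v ∈ pinnacleSet n σ | v ≤ q} :=
    calc (j : ℕ) < #{v ∈ Q | v ≤ q} := (lt_card_filter_le_iff_orderEmbOfFin_le hQk j q).mpr le_rfl
      _ ≤ _ := card_le_card (by rw [hP]; exact filter_subset_filter _ subset_union_left)
  have hVq : #{v ∈ valeSet n σ | v ≤ q} ≤ #{v ∈ W | v ≤ q} + 1 := by
    rw [hV, filter_union]
    have hone : #{v ∈ ({1} : Finset ℕ) | v ≤ q} ≤ 1 := card_filter_le _ _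
    exact (card_union_le _ _).trans (by omega)
  have hwq : W.orderEmbOfFin hWk j ≤ q := by
    rw [← lt_card_filter_le_iff_orderEmbOfFin_le]
    have := card_filter_pinnacleSet_le_lt σ (hQ q hqQ) (hQn q hqQ)
    omega
  exact hwq.lt_of_ne fun h => disjoint_left.mp hQW hqQ (h ▸ orderEmbOfFin_mem W hWk j)

section Arrangement

variable (Q W : Finset ℕ) (n : ℕ)

def fillers : Finset ℕ := Icc 1 n \ (Q ∪ W)

/-- The circular word `n, …, 1, q₁, w₁, …, q_k, w_k`: the fillers in decreasing order, followed
by the elements of `Q` and `W`, alternately and each in increasing order. -/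
noncomputable def arrangement (p : ℕ) : ℕ :=
  if p < #(fillers Q W n) then Nat.nth (· ∈ fillers Q W n) (#(fillers Q W n) - 1 - p)
  else if (p - #(fillers Q W n)) % 2 = 0 then Nat.nth (· ∈ Q) ((p - #(fillers Q W n)) / 2)
  else Nat.nth (· ∈ W) ((p - #(fillers Q W n)) / 2)

variable {Q W n}

theorem fillers_subset : fillers Q W n ⊆ Icc 1 n := sdiff_subset

theorem arrangement_of_lt {p : ℕ} (hp : p < #(fillers Q W n)) :
    arrangement Q W n p = Nat.nth (· ∈ fillers Q W n) (#(fillers Q W n) - 1 - p) :=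
  if_pos hp

theorem arrangement_card_add_two_mul (j : ℕ) :
    arrangement Q W n (#(fillers Q W n) + 2 * j) = Nat.nth (· ∈ Q) j := by
  rw [arrangement, if_neg (by omega), if_pos (by omega)]
  congr
  omega

theorem arrangement_card_add_two_mul_add_one (j : ℕ) :
    arrangement Q W n (#(fillers Q W n) + 2 * j + 1) = Nat.nth (· ∈ W) j := by
  rw [arrangement, if_neg (by omega), if_neg (by omega)]
  congr
  omega

theorem card_fillers_add {k : ℕ} (hQW : Disjoint Q W) (hQ : Q ⊆ Ioo 1 n) (hW : W ⊆ Ioo 1 n)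
    (hQk : #Q = k) (hWk : #W = k) : #(fillers Q W n) + 2 * k = n := by
  have hsub : Q ∪ W ⊆ Icc 1 n :=
    union_subset (hQ.trans Ioo_subset_Icc_self) (hW.trans Ioo_subset_Icc_self)
  have := card_le_card hsub
  rw [card_union_of_disjoint hQW, Nat.card_Icc] at this
  rw [fillers, card_sdiff_of_subset hsub, card_union_of_disjoint hQW, Nat.card_Icc]
  omega

theorem one_mem_fillers (hQ : Q ⊆ Ioo 1 n) (hW : W ⊆ Ioo 1 n) (hn : 1 ≤ n) :
    1 ∈ fillers Q W n := by
  simp only [fillers, mem_sdiff, mem_Icc, mem_union, not_or]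
  exact ⟨⟨le_rfl, hn⟩, fun h => by simpa using hQ h, fun h => by simpa using hW h⟩

theorem self_mem_fillers (hQ : Q ⊆ Ioo 1 n) (hW : W ⊆ Ioo 1 n) (hn : 1 ≤ n) :
    n ∈ fillers Q W n := by
  simp only [fillers, mem_sdiff, mem_Icc, mem_union, not_or]
  exact ⟨⟨hn, le_rfl⟩, fun h => by simpa using hQ h, fun h => by simpa using hW h⟩

theorem two_le_card_fillers (hQ : Q ⊆ Ioo 1 n) (hW : W ⊆ Ioo 1 n) (hn : 2 ≤ n) :
    2 ≤ #(fillers Q W n) := by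
  have hsub : {1, n} ⊆ fillers Q W n := by
    simp [insert_subset_iff, one_mem_fillers hQ hW (by omega), self_mem_fillers hQ hW (by omega)]
  simpa [card_pair (by omega : 1 ≠ n)] using card_le_card hsub

theorem arrangement_zero (hQ : Q ⊆ Ioo 1 n) (hW : W ⊆ Ioo 1 n) (hn : 1 ≤ n) :
    arrangement Q W n 0 = n := by
  have hmem := self_mem_fillers hQ hW hn
  rw [arrangement_of_lt (card_pos.mpr ⟨n, hmem⟩), Nat.sub_zero]
  exact nth_card_sub_one_eq _ hmem fun y hy => (mem_Icc.1 (fillers_subset hy)).2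

theorem arrangement_card_fillers_sub_one (hQ : Q ⊆ Ioo 1 n) (hW : W ⊆ Ioo 1 n) (hn : 1 ≤ n) :
    arrangement Q W n (#(fillers Q W n) - 1) = 1 := by
  have hmem := one_mem_fillers hQ hW hn
  have hpos := card_pos.mpr ⟨1, hmem⟩
  rw [arrangement_of_lt (by omega), Nat.sub_self]
  exact nth_zero_eq _ hmem fun y hy => (mem_Icc.1 (fillers_subset hy)).1

theorem arrangement_mem_Icc {k : ℕ} (hQ : Q ⊆ Ioo 1 n) (hW : W ⊆ Ioo 1 n) (hQk : #Q = k)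
    (hWk : #W = k) (hcard : #(fillers Q W n) + 2 * k = n) {p : ℕ} (hp : p < n) :
    arrangement Q W n p ∈ Icc 1 n := by
  by_cases hpd : p < #(fillers Q W n)
  · rw [arrangement_of_lt hpd]
    exact fillers_subset (nth_mem_of_lt_card _ (by omega))
  obtain ⟨j, hj, rfl | rfl⟩ : ∃ j < k, p = #(fillers Q W n) + 2 * j ∨
      p = #(fillers Q W n) + 2 * j + 1 := ⟨(p - #(fillers Q W n)) / 2, by omega, by omega⟩
  · rw [arrangement_card_add_two_mul]
    exact Ioo_subset_Icc_self (hQ (Q.nth_mem_of_lt_card (by omega)))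
  · rw [arrangement_card_add_two_mul_add_one]
    exact Ioo_subset_Icc_self (hW (W.nth_mem_of_lt_card (by omega)))

theorem exists_arrangement_eq {k : ℕ} (hQk : #Q = k) (hWk : #W = k)
    (hcard : #(fillers Q W n) + 2 * k = n) {v : ℕ} (hv : v ∈ Icc 1 n) :
    ∃ p < n, arrangement Q W n p = v := by
  by_cases hvD : v ∈ fillers Q W n
  · obtain ⟨j, hj, rfl⟩ := exists_lt_card_nth_eq _ hvD
    exact ⟨#(fillers Q W n) - 1 - j, by omega, by rw [arrangement_of_lt (by omega)]; congr 1; omega⟩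
  have hvQW : v ∈ Q ∨ v ∈ W := by
    simpa only [fillers, mem_sdiff, mem_union, hv, true_and, not_not] using hvD
  rcases hvQW with hvQ | hvW
  · obtain ⟨j, hj, rfl⟩ := Q.exists_lt_card_nth_eq hvQ
    exact ⟨_, by omega, arrangement_card_add_two_mul j⟩
  · obtain ⟨j, hj, rfl⟩ := W.exists_lt_card_nth_eq hvW
    exact ⟨_, by omega, arrangement_card_add_two_mul_add_one j⟩

theorem arrangement_lt_iff {k : ℕ} (hQ : Q ⊆ Ioo 1 n) (hW : W ⊆ Ioo 1 n) (hQk : #Q = k)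
    (hWk : #W = k) (hcard : #(fillers Q W n) + 2 * k = n)
    (hlt : ∀ j < k, Nat.nth (· ∈ W) j < Nat.nth (· ∈ Q) j) (hn : 2 ≤ n) {p : ℕ} (hp : p < n) :
    arrangement Q W n (if p + 1 = n then 0 else p + 1) < arrangement Q W n p ↔
      p + 1 < #(fillers Q W n) ∨ #(fillers Q W n) ≤ p ∧ (p - #(fillers Q W n)) % 2 = 0 := by
  set d := #(fillers Q W n)
  have hd2 := two_le_card_fillers hQ hW hn
  have hmem {p : ℕ} (hp : p < n) := arrangement_mem_Icc hQ hW hQk hWk hcard hp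
  rcases lt_or_ge (p + 1) d with hpd | hpd
  · rw [if_neg (by omega), arrangement_of_lt hpd, arrangement_of_lt (by omega)]
    exact iff_of_true (nth_strictMonoOn _ (Set.mem_Iio.mpr (by omega))
      (Set.mem_Iio.mpr (by omega)) (by omega)) (Or.inl hpd)
  obtain hpd | ⟨j, hj, rfl | rfl⟩ : p + 1 = d ∨ ∃ j < k, p = d + 2 * j ∨ p = d + 2 * j + 1 := by
    rcases hpd.eq_or_lt with h | h
    · exact Or.inl h.symm
    · exact Or.inr ⟨(p - d) / 2, by omega, by omega⟩
  · rw [show p = d - 1 by omega, arrangement_card_fillers_sub_one hQ hW (by omega)]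
    refine iff_of_false (not_lt.mpr (mem_Icc.1 (hmem ?_)).1) (by omega)
    split_ifs <;> omega
  · rw [if_neg (by omega), arrangement_card_add_two_mul, arrangement_card_add_two_mul_add_one]
    exact iff_of_true (hlt j hj) (Or.inr ⟨by omega, by omega⟩)
  · rw [arrangement_card_add_two_mul_add_one]
    refine iff_of_false (not_lt.mpr ?_) (by omega)
    by_cases hjk : j + 1 < k
    · rw [if_neg (by omega), show d + 2 * j + 1 + 1 = d + 2 * (j + 1) by ring,
        arrangement_card_add_two_mul]
      exact ((hlt j hj).trans (Q.nth_strictMonoOn (Set.mem_Iio.mpr (by omega))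
        (Set.mem_Iio.mpr (by omega)) (by omega))).le
    · rw [if_pos (by omega), arrangement_zero hQ hW (by omega)]
      exact (mem_Icc.1 (Ioo_subset_Icc_self (hW (W.nth_mem_of_lt_card (by omega))))).2

end Arrangement

section ArrangementPermutation

variable {n k : ℕ} {Q W : Finset ℕ} (σ : Equiv.Perm (Fin n))

theorem pinnacleSet_eq_of_arrangement (hQ : Q ⊆ Ioo 1 n) (hW : W ⊆ Ioo 1 n) (hQk : #Q = k)
    (hcard : #(fillers Q W n) + 2 * k = n) (hn : 1 ≤ n)
    (hσ : ∀ i, (σ i : ℕ) + 1 = arrangement Q W n i)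
    (hpin : ∀ i : Fin n, i ∈ cyclicPinnacles (finRotate n) σ ↔
      (i : ℕ) = 0 ∨ #(fillers Q W n) ≤ i ∧ (i - #(fillers Q W n)) % 2 = 0) :
    pinnacleSet n σ = Q ∪ {n} := by
  set d := #(fillers Q W n)
  ext v
  simp only [pinnacleSet_eq_image, mem_image, hpin, hσ, mem_union, mem_singleton]
  constructor
  · rintro ⟨i, hi | ⟨hdi, hi⟩, rfl⟩
    · exact Or.inr (by rw [hi, arrangement_zero hQ hW hn])
    · obtain ⟨j, hj⟩ : ∃ j, (i : ℕ) = d + 2 * j := ⟨(i - d) / 2, by omega⟩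
      rw [hj, arrangement_card_add_two_mul]
      exact Or.inl (Q.nth_mem_of_lt_card (by omega))
  · rintro (hv | rfl)
    · obtain ⟨j, hj, rfl⟩ := Q.exists_lt_card_nth_eq hv
      refine ⟨⟨d + 2 * j, by omega⟩, Or.inr ?_, arrangement_card_add_two_mul j⟩
      exact show d ≤ d + 2 * j ∧ (d + 2 * j - d) % 2 = 0 by omega
    · exact ⟨⟨0, by omega⟩, Or.inl rfl, arrangement_zero hQ hW hn⟩

theorem valeSet_eq_of_arrangement (hQ : Q ⊆ Ioo 1 n) (hW : W ⊆ Ioo 1 n) (hWk : #W = k)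
    (hcard : #(fillers Q W n) + 2 * k = n) (hn : 1 ≤ n)
    (hσ : ∀ i, (σ i : ℕ) + 1 = arrangement Q W n i)
    (hvale : ∀ i : Fin n, i ∈ cyclicVales (finRotate n) σ ↔
      (i : ℕ) + 1 = #(fillers Q W n) ∨ #(fillers Q W n) ≤ i ∧ (i - #(fillers Q W n)) % 2 = 1) :
    valeSet n σ = W ∪ {1} := by
  set d := #(fillers Q W n)
  ext v
  simp only [valeSet_eq_image, mem_image, hvale, hσ, mem_union, mem_singleton]
  constructor
  · rintro ⟨i, hi | ⟨hdi, hi⟩, rfl⟩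
    · rw [show (i : ℕ) = d - 1 by omega, arrangement_card_fillers_sub_one hQ hW hn]
      exact Or.inr rfl
    · obtain ⟨j, hj⟩ : ∃ j, (i : ℕ) = d + 2 * j + 1 := ⟨(i - d) / 2, by omega⟩
      rw [hj, arrangement_card_add_two_mul_add_one]
      exact Or.inl (W.nth_mem_of_lt_card (by omega))
  · have hd : 1 ≤ d := card_pos.mpr ⟨1, one_mem_fillers hQ hW hn⟩
    rintro (hv | rfl)
    · obtain ⟨j, hj, rfl⟩ := W.exists_lt_card_nth_eq hv
      refine ⟨⟨d + 2 * j + 1, by omega⟩, Or.inr ?_, arrangement_card_add_two_mul_add_one j⟩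
      exact show d ≤ d + 2 * j + 1 ∧ (d + 2 * j + 1 - d) % 2 = 1 by omega
    · refine ⟨⟨d - 1, by omega⟩, Or.inl ?_, arrangement_card_fillers_sub_one hQ hW hn⟩
      exact show d - 1 + 1 = d by omega

end ArrangementPermutation

theorem exists_perm_pinnacleSet_valeSet {n k : ℕ} {Q W : Finset ℕ} (hQW : Disjoint Q W)
    (hQ : Q ⊆ Ioo 1 n) (hW : W ⊆ Ioo 1 n) (hQk : #Q = k) (hWk : #W = k)
    (hlt : ∀ j < k, Nat.nth (· ∈ W) j < Nat.nth (· ∈ Q) j) (hn : 2 ≤ n) :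
    ∃ σ : Equiv.Perm (Fin n), pinnacleSet n σ = Q ∪ {n} ∧ valeSet n σ = W ∪ {1} := by
  have hcard := card_fillers_add hQW hQ hW hQk hWk
  obtain ⟨σ, hσ⟩ := exists_perm_val_add_one_eq (arrangement Q W n)
    (fun _ hp => arrangement_mem_Icc hQ hW hQk hWk hcard hp)
    (fun _ hv => exists_arrangement_eq hQk hWk hcard hv)
  set d := #(fillers Q W n)
  have hd := two_le_card_fillers hQ hW hn
  have hdesc (i : Fin n) : i ∈ cyclicDescents (finRotate n) σ ↔
      (i : ℕ) + 1 < d ∨ d ≤ i ∧ (i - d) % 2 = 0 := by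
    rw [mem_cyclicDescents_finRotate_iff σ _ hσ]
    exact arrangement_lt_iff hQ hW hQk hWk hcard hlt hn i.2
  refine ⟨σ, pinnacleSet_eq_of_arrangement σ hQ hW hQk hcard (by omega) hσ fun i => ?_,
    valeSet_eq_of_arrangement σ hQ hW hWk hcard (by omega) hσ fun i => ?_⟩
  · rw [mem_cyclicPinnacles_iff σ.injective (finRotate_apply_ne hn), hdesc, hdesc,
      val_finRotate_symm]
    split_ifs <;> omega
  · rw [mem_cyclicVales_iff σ.injective (finRotate_apply_ne hn), hdesc, hdesc,
      val_finRotate_symm]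
    split_ifs <;> omega

/-- Admissibility criterion: a pair `(Q, W)` of disjoint `k`-element subsets of `ℤ_{≥2}`,
with increasing enumerations `q_1 < ⋯ < q_k` and `w_1 < ⋯ < w_k`, is realizable as
the pinnacle set `Q ∪ {n}` and vale set `W ∪ {1}` of some circular `n`-permutation with
`n > max Q`, if and only if `q_j > w_j` for all `j`. -/
theorem admissible_iff (k : ℕ) (Q W : Finset ℕ)
    (hQW : Disjoint Q W) (hQ2 : ∀ q ∈ Q, 2 ≤ q) (hW2 : ∀ w ∈ W, 2 ≤ w)
    (hQk : Q.card = k) (hWk : W.card = k) :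
    (∃ n : ℕ, (∀ q ∈ Q, q < n) ∧
        ∃ σ : Equiv.Perm (Fin n),
          pinnacleSet n σ = Q ∪ {n} ∧ valeSet n σ = W ∪ {1})
      ↔ ∀ j : Fin k, W.orderEmbOfFin hWk j < Q.orderEmbOfFin hQk j := by
  constructor
  · rintro ⟨n, hQn, σ, hP, hV⟩
    exact orderEmbOfFin_lt_of_pinnacleSet_eq hQW (fun q hq => two_pos.trans_le (hQ2 q hq)) hQn
      hQk hWk σ hP hV
  · intro h
    have hlt (j : ℕ) (hj : j < k) : Nat.nth (· ∈ W) j < Nat.nth (· ∈ Q) j := by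
      simpa only [orderEmbOfFin_apply_eq_nth] using h ⟨j, hj⟩
    set n := Q.sup id + 2
    have hQn (q : ℕ) (hq : q ∈ Q) : q < n := (le_sup (f := id) hq).trans_lt (by omega)
    have hWn (w : ℕ) (hw : w ∈ W) : w < n := by
      obtain ⟨j, hj, rfl⟩ := W.exists_lt_card_nth_eq hw
      exact (hlt j (by omega)).trans (hQn _ (Q.nth_mem_of_lt_card (by omega)))
    obtain ⟨σ, hσ⟩ := exists_perm_pinnacleSet_valeSet hQW
      (fun q hq => mem_Ioo.2 ⟨hQ2 q hq, hQn q hq⟩) (fun w hw => mem_Ioo.2 ⟨hW2 w hw, hWn w hw⟩)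
      hQk hWk hlt (by omega)
    exact ⟨n, hQn, σ, hσ⟩
end

section
/- If the pair (Q,W) of disjoint subsets of integers ≥ 2 with |Q|=|W| is n-admissible, then it is (n+1)-admissible; consequently it is m-admissible for every m ≥ n. -/
set_option autoImplicit false

/-- `(Q, W)` is `n`-admissible: `n` exceeds every element of `Q` and some circular
`n`-permutation has pinnacle set `Q ∪ {n}` and vale set `W ∪ {1}`. -/
def IsAdmissible (n : ℕ) (Q W : Finset ℕ) : Prop :=
  (∀ q ∈ Q, q < n) ∧
    ∃ σ : Equiv.Perm (Fin n), pinnacleSet n σ = Q ∪ {n} ∧ valeSet n σ = W ∪ {1}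


/-!
Rotate a circular `n`-permutation witnessing admissibility so that its maximum `n` sits at
position `0`, and append the new maximum `n + 1` after the last position, i.e. cyclically just
before `n`. Then `n + 1` is a pinnacle and `n` no longer is, while every other position keeps
the relative order with its two neighbours (the old last position now sees `n + 1` instead of
`n` on its right, both larger than it). So the pinnacle set becomes `Q ∪ {n + 1}` and the vale
set is unchanged; induction then gives every `m ≥ n`.
-/

open Equiv Finset

namespace Fin

variable {n : ℕ}

lemma castSucc_add_one_of_ne_last {i : Fin (n + 1)} (h : i ≠ last n) :
    (castSucc i : Fin (n + 2)) + 1 = castSucc (i + 1) := by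
  have hi : (i : ℕ) < n := lt_of_le_of_ne (le_last i) (by simpa [Fin.ext_iff] using h)
  ext
  rw [val_add_one_of_lt (castSucc_lt_last i), val_castSucc, val_castSucc,
    val_add_one_of_lt (by simpa [lt_def] using hi)]

lemma castSucc_last_add_one : (castSucc (last n) : Fin (n + 2)) + 1 = last (n + 1) := by
  rw [coeSucc_eq_succ, succ_last]

lemma castSucc_sub_one_of_ne_zero {i : Fin (n + 1)} (h : i ≠ 0) :
    (castSucc i : Fin (n + 2)) - 1 = castSucc (i - 1) := by
  have h' : i - 1 ≠ last n := fun hl => h (by rw [← sub_add_cancel i 1, hl, last_add_one])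
  rw [sub_eq_iff_eq_add, castSucc_add_one_of_ne_last h', sub_add_cancel]

lemma castSucc_zero_sub_one : (castSucc 0 : Fin (n + 2)) - 1 = last (n + 1) := by
  rw [sub_eq_iff_eq_add, last_add_one, castSucc_zero]

lemma last_sub_one : last (n + 1) - 1 = (castSucc (last n) : Fin (n + 2)) := by
  rw [sub_eq_iff_eq_add, castSucc_last_add_one]

end Fin

section Positions

variable {n : ℕ}

def IsPinnacleAt (σ : Perm (Fin (n + 1))) (i : Fin (n + 1)) : Prop :=
  σ (i - 1) < σ i ∧ σ (i + 1) < σ i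

def IsValeAt (σ : Perm (Fin (n + 1))) (i : Fin (n + 1)) : Prop :=
  σ i < σ (i - 1) ∧ σ i < σ (i + 1)

lemma IsPinnacleAt.not_isValeAt {σ : Perm (Fin (n + 1))} {i : Fin (n + 1)}
    (h : IsPinnacleAt σ i) : ¬IsValeAt σ i :=
  fun h' => lt_asymm h.2 h'.2

lemma mem_pinnacleSet_iff (σ : Perm (Fin (n + 1))) (a : ℕ) :
    a ∈ pinnacleSet (n + 1) σ ↔ ∃ i, IsPinnacleAt σ i ∧ (σ i : ℕ) + 1 = a := by
  simp [pinnacleSet, IsPinnacleAt]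

lemma mem_valeSet_iff (σ : Perm (Fin (n + 1))) (a : ℕ) :
    a ∈ valeSet (n + 1) σ ↔ ∃ i, IsValeAt σ i ∧ (σ i : ℕ) + 1 = a := by
  simp [valeSet, IsValeAt]

lemma two_le_of_mem_pinnacleSet {n a : ℕ} {σ : Perm (Fin n)} (h : a ∈ pinnacleSet n σ) :
    2 ≤ n := by
  match n, σ, h with
  | 0, _, h => simp [pinnacleSet] at h
  | 1, σ, h =>
    obtain ⟨i, ⟨hi, -⟩, -⟩ := (mem_pinnacleSet_iff σ a).1 h
    simp at hi
  | n + 2, _, _ => omega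

lemma isPinnacleAt_mul_addRight (σ : Perm (Fin (n + 1))) (i j : Fin (n + 1)) :
    IsPinnacleAt (σ * Equiv.addRight j) i ↔ IsPinnacleAt σ (i + j) := by
  simp only [IsPinnacleAt, Perm.mul_apply, coe_addRight, sub_add_eq_add_sub,
    add_right_comm _ (1 : Fin (n + 1))]

lemma isValeAt_mul_addRight (σ : Perm (Fin (n + 1))) (i j : Fin (n + 1)) :
    IsValeAt (σ * Equiv.addRight j) i ↔ IsValeAt σ (i + j) := by
  simp only [IsValeAt, Perm.mul_apply, coe_addRight, sub_add_eq_add_sub,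
    add_right_comm _ (1 : Fin (n + 1))]

lemma pinnacleSet_mul_addRight (σ : Perm (Fin (n + 1))) (j : Fin (n + 1)) :
    pinnacleSet (n + 1) (σ * Equiv.addRight j) = pinnacleSet (n + 1) σ := by
  ext a
  simp only [mem_pinnacleSet_iff, isPinnacleAt_mul_addRight, Perm.mul_apply, coe_addRight]
  exact ⟨fun ⟨i, hi⟩ => ⟨i + j, hi⟩, fun ⟨i, hi⟩ => ⟨i - j, by simpa using hi⟩⟩

lemma valeSet_mul_addRight (σ : Perm (Fin (n + 1))) (j : Fin (n + 1)) :
    valeSet (n + 1) (σ * Equiv.addRight j) = valeSet (n + 1) σ := by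
  ext a
  simp only [mem_valeSet_iff, isValeAt_mul_addRight, Perm.mul_apply, coe_addRight]
  exact ⟨fun ⟨i, hi⟩ => ⟨i + j, hi⟩, fun ⟨i, hi⟩ => ⟨i - j, by simpa using hi⟩⟩

lemma exists_rotation_apply_zero_eq_last (σ : Perm (Fin (n + 1))) :
    ∃ σ' : Perm (Fin (n + 1)), σ' 0 = Fin.last n ∧
      pinnacleSet (n + 1) σ' = pinnacleSet (n + 1) σ ∧
      valeSet (n + 1) σ' = valeSet (n + 1) σ :=
  ⟨σ * Equiv.addRight (σ.symm (Fin.last n)), by simp, pinnacleSet_mul_addRight _ _,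
    valeSet_mul_addRight _ _⟩

end Positions

section ExtendLast

variable {n : ℕ}

def extendLast (σ : Perm (Fin n)) : Perm (Fin (n + 1)) :=
  σ.viaFintypeEmbedding Fin.castSuccEmb

@[simp]
lemma extendLast_castSucc (σ : Perm (Fin n)) (i : Fin n) :
    extendLast σ (Fin.castSucc i) = Fin.castSucc (σ i) :=
  σ.viaFintypeEmbedding_apply_image Fin.castSuccEmb i

@[simp]
lemma extendLast_last (σ : Perm (Fin n)) : extendLast σ (Fin.last n) = Fin.last n :=
  σ.viaFintypeEmbedding_apply_notMem_range _ (by simp)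

lemma isPinnacleAt_extendLast_last (σ : Perm (Fin (n + 1))) :
    IsPinnacleAt (extendLast σ) (Fin.last (n + 1)) := by
  rw [IsPinnacleAt, Fin.last_sub_one, Fin.last_add_one, ← Fin.castSucc_zero, extendLast_castSucc,
    extendLast_castSucc, extendLast_last]
  exact ⟨Fin.castSucc_lt_last _, Fin.castSucc_lt_last _⟩

lemma extendLast_castSucc_add_one_lt_iff {σ : Perm (Fin (n + 2))} (h0 : σ 0 = Fin.last (n + 1))
    (i : Fin (n + 2)) :
    extendLast σ (Fin.castSucc i + 1) < extendLast σ (Fin.castSucc i) ↔ σ (i + 1) < σ i := by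
  rcases eq_or_ne i (Fin.last _) with rfl | hi
  · rw [Fin.castSucc_last_add_one, Fin.last_add_one, h0, extendLast_last, extendLast_castSucc]
    exact iff_of_false (not_lt.2 (Fin.castSucc_lt_last _).le) (not_lt.2 (Fin.le_last _))
  · rw [Fin.castSucc_add_one_of_ne_last hi, extendLast_castSucc, extendLast_castSucc,
      Fin.castSucc_lt_castSucc_iff]

lemma extendLast_castSucc_lt_add_one_iff {σ : Perm (Fin (n + 2))} (h0 : σ 0 = Fin.last (n + 1))
    (i : Fin (n + 2)) :
    extendLast σ (Fin.castSucc i) < extendLast σ (Fin.castSucc i + 1) ↔ σ i < σ (i + 1) := by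
  rcases eq_or_ne i (Fin.last _) with rfl | hi
  · rw [Fin.castSucc_last_add_one, Fin.last_add_one, h0, extendLast_last, extendLast_castSucc]
    refine iff_of_true (Fin.castSucc_lt_last _) (lt_of_le_of_ne (Fin.le_last _) ?_)
    exact fun h => Fin.last_pos.ne' (σ.injective (h.trans h0.symm))
  · rw [Fin.castSucc_add_one_of_ne_last hi, extendLast_castSucc, extendLast_castSucc,
      Fin.castSucc_lt_castSucc_iff]

lemma isPinnacleAt_extendLast_castSucc {σ : Perm (Fin (n + 2))} (h0 : σ 0 = Fin.last (n + 1))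
    (i : Fin (n + 2)) :
    IsPinnacleAt (extendLast σ) (Fin.castSucc i) ↔ i ≠ 0 ∧ IsPinnacleAt σ i := by
  rcases eq_or_ne i 0 with rfl | hi
  · rw [IsPinnacleAt, Fin.castSucc_zero_sub_one, extendLast_last, extendLast_castSucc]
    exact iff_of_false (fun h => not_lt.2 (Fin.castSucc_lt_last _).le h.1) (fun h => h.1 rfl)
  · rw [IsPinnacleAt, IsPinnacleAt, extendLast_castSucc_add_one_lt_iff h0,
      Fin.castSucc_sub_one_of_ne_zero hi, extendLast_castSucc, extendLast_castSucc,
      Fin.castSucc_lt_castSucc_iff]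
    exact ⟨fun h => ⟨hi, h⟩, And.right⟩

lemma isValeAt_extendLast_castSucc {σ : Perm (Fin (n + 2))} (h0 : σ 0 = Fin.last (n + 1))
    (i : Fin (n + 2)) :
    IsValeAt (extendLast σ) (Fin.castSucc i) ↔ IsValeAt σ i := by
  rcases eq_or_ne i 0 with rfl | hi
  · have h0_not_lt : ¬σ 0 < σ (0 + 1) := not_lt.2 (h0 ▸ Fin.le_last _)
    exact iff_of_false (fun h => h0_not_lt ((extendLast_castSucc_lt_add_one_iff h0 0).1 h.2))
      (fun h => h0_not_lt h.2)
  · rw [IsValeAt, IsValeAt, extendLast_castSucc_lt_add_one_iff h0,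
      Fin.castSucc_sub_one_of_ne_zero hi, extendLast_castSucc, extendLast_castSucc,
      Fin.castSucc_lt_castSucc_iff]

lemma pinnacleSet_extendLast {σ : Perm (Fin (n + 2))} (h0 : σ 0 = Fin.last (n + 1)) :
    pinnacleSet (n + 3) (extendLast σ) =
      insert (n + 3) ((pinnacleSet (n + 2) σ).erase (n + 2)) := by
  have hval : ∀ i, (σ i : ℕ) + 1 = n + 2 ↔ i = 0 := fun i => by
    rw [← σ.injective.eq_iff, h0, Fin.ext_iff, Fin.val_last]
    omega
  ext a
  rw [mem_pinnacleSet_iff, Fin.exists_fin_succ']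
  simp only [mem_pinnacleSet_iff, isPinnacleAt_extendLast_castSucc h0,
    extendLast_castSucc, extendLast_last, isPinnacleAt_extendLast_last, Fin.val_castSucc,
    Fin.val_last, true_and, mem_insert, mem_erase]
  constructor
  · rintro (⟨i, ⟨hi, hp⟩, rfl⟩ | rfl)
    · exact Or.inr ⟨fun h => hi ((hval i).1 h), i, hp, rfl⟩
    · exact Or.inl rfl
  · rintro (rfl | ⟨ha, i, hp, rfl⟩)
    · exact Or.inr rfl
    · exact Or.inl ⟨i, ⟨fun hi => ha ((hval i).2 hi), hp⟩, rfl⟩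

lemma valeSet_extendLast {σ : Perm (Fin (n + 2))} (h0 : σ 0 = Fin.last (n + 1)) :
    valeSet (n + 3) (extendLast σ) = valeSet (n + 2) σ := by
  ext a
  rw [mem_valeSet_iff, Fin.exists_fin_succ']
  simp only [mem_valeSet_iff, isValeAt_extendLast_castSucc h0,
    extendLast_castSucc, Fin.val_castSucc, or_iff_left_iff_imp]
  rintro ⟨h, -⟩
  exact absurd h (isPinnacleAt_extendLast_last σ).not_isValeAt

end ExtendLast

lemma IsAdmissible.succ {n : ℕ} {Q W : Finset ℕ} (h : IsAdmissible n Q W) :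
    IsAdmissible (n + 1) Q W := by
  obtain ⟨hQ, σ, hpin, hval⟩ := h
  obtain ⟨m, rfl⟩ : ∃ m, n = m + 2 :=
    ⟨n - 2, by
      have := two_le_of_mem_pinnacleSet (hpin ▸ mem_union_right Q (mem_singleton_self n))
      omega⟩
  obtain ⟨σ', h0, hpin', hval'⟩ := exists_rotation_apply_zero_eq_last σ
  refine ⟨fun q hq => (hQ q hq).trans (Nat.lt_succ_self _), extendLast σ', ?_, ?_⟩
  · rw [pinnacleSet_extendLast h0, hpin', hpin]
    ext a
    have := hQ a
    simp only [mem_insert, mem_erase, mem_union, mem_singleton]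
    grind
  · rw [valeSet_extendLast h0, hval', hval]

lemma IsAdmissible.mono {n m : ℕ} {Q W : Finset ℕ} (h : IsAdmissible n Q W) (hnm : n ≤ m) :
    IsAdmissible m Q W := by
  induction m, hnm using Nat.le_induction with
  | base => exact h
  | succ m _ ih => exact ih.succ

theorem isAdmissible_succ_and_ge_general (n : ℕ) (Q W : Finset ℕ)
    (h : IsAdmissible n Q W) :
    IsAdmissible (n + 1) Q W ∧ ∀ m, n ≤ m → IsAdmissible m Q W :=
  ⟨h.succ, fun _ => h.mono⟩

/-- If a pair `(Q, W)` of disjoint subsets of `ℤ_{≥2}` of equal cardinality is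
`n`-admissible, then it is `(n+1)`-admissible; consequently it is `m`-admissible
for every `m ≥ n`. -/
theorem isAdmissible_succ_and_ge (n : ℕ) (Q W : Finset ℕ)
    (hQW : Disjoint Q W) (hQ2 : ∀ q ∈ Q, 2 ≤ q) (hW2 : ∀ w ∈ W, 2 ≤ w)
    (hcard : Q.card = W.card) (h : IsAdmissible n Q W) :
    IsAdmissible (n + 1) Q W ∧ ∀ m, n ≤ m → IsAdmissible m Q W :=
  isAdmissible_succ_and_ge_general n Q W h
end

section
/- ζ(8) = (4π⁸/255) · (2·(1/3)·(1/6)·(1/7)·(1/8) + 4·(1/3)·(1/5)·(1/7)·(1/8)) = π⁸/9450. -/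
set_option autoImplicit false

open Real

lemma zeta8 : HasSum (fun n : ℕ => (1 : ℝ) / (n : ℝ) ^ 8) (π ^ 8 / 9450) := by
  have b5 : bernoulli' 5 = 0 := by
    rw [bernoulli'_def]
    norm_num [Finset.sum_range_succ, bernoulli'_zero, bernoulli'_one, bernoulli'_two,
      bernoulli'_three, bernoulli'_four, Nat.choose]
  have b6 : bernoulli' 6 = 1/42 := by
    rw [bernoulli'_def]
    norm_num [Finset.sum_range_succ, bernoulli'_zero, bernoulli'_one, bernoulli'_two,
      bernoulli'_three, bernoulli'_four, b5, Nat.choose]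
  have b7 : bernoulli' 7 = 0 := by
    rw [bernoulli'_def]
    norm_num [Finset.sum_range_succ, bernoulli'_zero, bernoulli'_one, bernoulli'_two,
      bernoulli'_three, bernoulli'_four, b5, b6, Nat.choose]
  have b8 : bernoulli' 8 = -1/30 := by
    rw [bernoulli'_def]
    norm_num [Finset.sum_range_succ, bernoulli'_zero, bernoulli'_one, bernoulli'_two,
      bernoulli'_three, bernoulli'_four, b5, b6, b7, Nat.choose]
  have h := hasSum_zeta_nat (k := 4) (by norm_num)
  have hb : bernoulli 8 = -1/30 := by
    rw [bernoulli_eq_bernoulli'_of_ne_one (by norm_num), b8]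
  rw [show 2 * 4 = 8 from rfl, hb] at h
  norm_num [Nat.factorial] at h
  convert h using 1
  · ext n; rw [one_div]
  · ring

/-- The `n = 4` instance of the class-number formula for `ζ(2n)`:
`ζ(8) = (4π⁸/(4⁴−1))·(2·(1/3)·(1/6)·(1/7)·(1/8) + 4·(1/3)·(1/5)·(1/7)·(1/8)) = π⁸/9450`. -/
theorem zeta_eight_via_class_numbers :
    (∑' k : ℕ, 1 / ((k : ℝ) + 1) ^ 8
      = 4 * π ^ 8 / (4 ^ 4 - 1) *
          (2 * (1 / 3) * (1 / 6) * (1 / 7) * (1 / 8)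
            + 4 * (1 / 3) * (1 / 5) * (1 / 7) * (1 / 8))) ∧
    4 * π ^ 8 / (4 ^ 4 - 1) *
        (2 * (1 / 3) * (1 / 6) * (1 / 7) * (1 / 8)
          + 4 * (1 / 3) * (1 / 5) * (1 / 7) * (1 / 8)) = π ^ 8 / 9450 := by
  have h2 : 4 * π ^ 8 / (4 ^ 4 - 1) *
        (2 * (1 / 3) * (1 / 6) * (1 / 7) * (1 / 8)
          + 4 * (1 / 3) * (1 / 5) * (1 / 7) * (1 / 8)) = π ^ 8 / 9450 := by ring
  refine ⟨?_, h2⟩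
  rw [h2]
  have h := ((hasSum_nat_add_iff' (f := fun n : ℕ => (1 : ℝ) / (n : ℝ) ^ 8) 1).mpr zeta8)
  simp only [Finset.sum_range_one] at h
  norm_num at h
  have := h.tsum_eq
  rw [← this]
  congr 1
  ext k
  ring
end
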